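/- arXiv:1906.05089 — 2 statements merged into one kernel-verified Lean document; each statement's English description precedes it below -/
import Mathlib

section
/- For every integer n ≥ 3, the upper broadcast irredundance number of the cycle C_n equals its upper broadcast domination number, i.e. IR_b(C_n) = Γ_b(C_n). -/
open SimpleGraph

namespace Broadcast

variable {V : Type*} [Fintype V]

/-- The eccentricity of a vertex: the maximum distance from `v` to any vertex. -/
noncomputable def ecc (G : SimpleGraph V) (v : V) : ℕ :=
  Finset.univ.sup fun u => G.dist v u

/-- A broadcast on `G`: `f v ≤ e_G(v)` for every vertex `v`. -/
def IsBroadcast (G : SimpleGraph V) (f : V → ℕ) : Prop :=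
  ∀ v, f v ≤ ecc G v

/-- The cost of a broadcast. -/
def cost (f : V → ℕ) : ℕ := ∑ v, f v

/-- `hears G f u` is H_f(u): the set of f-broadcast vertices `v` with `d(u,v) ≤ f v`. -/
def hears (G : SimpleGraph V) (f : V → ℕ) (u : V) : Set V :=
  {v | 1 ≤ f v ∧ G.dist u v ≤ f v}

/-- A dominating broadcast: every vertex hears some broadcast vertex. -/
def IsDominating (G : SimpleGraph V) (f : V → ℕ) : Prop :=
  IsBroadcast G f ∧ ∀ u, (hears G f u).Nonempty

/-- A minimal dominating broadcast. -/
def IsMinimalDominating (G : SimpleGraph V) (f : V → ℕ) : Prop :=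
  IsDominating G f ∧ ∀ g, IsDominating G g → (∀ v, g v ≤ f v) → g = f

/-- The broadcast domination number γ_b: minimum cost of a dominating broadcast. -/
noncomputable def broadcastDomination (G : SimpleGraph V) : ℕ :=
  sInf {c | ∃ f, IsDominating G f ∧ cost f = c}

/-- The upper broadcast domination number Γ_b: maximum cost of a minimal dominating broadcast. -/
noncomputable def upperBroadcastDomination (G : SimpleGraph V) : ℕ :=
  sSup {c | ∃ f, IsMinimalDominating G f ∧ cost f = c}

/-- The private f-neighborhood PN_f(v): vertices hearing only `v`. -/
def privateNbhd (G : SimpleGraph V) (f : V → ℕ) (v : V) : Set V :=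
  {u | hears G f u = {v}}

open Classical in
/-- The private f-border PB_f(v). -/
noncomputable def privateBorder (G : SimpleGraph V) (f : V → ℕ) (v : V) : Set V :=
  if f v = 1 ∧ privateNbhd G f v = {v} then {v}
  else {u | u ∈ privateNbhd G f v ∧ G.dist u v = f v}

/-- An irredundant broadcast: every broadcast vertex has a nonempty private border. -/
def IsIrredundant (G : SimpleGraph V) (f : V → ℕ) : Prop :=
  IsBroadcast G f ∧ ∀ v, 1 ≤ f v → (privateBorder G f v).Nonempty

/-- A maximal irredundant broadcast. -/
def IsMaximalIrredundant (G : SimpleGraph V) (f : V → ℕ) : Prop :=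
  IsIrredundant G f ∧ ∀ g, IsIrredundant G g → (∀ v, f v ≤ g v) → g = f

/-- The upper broadcast irredundance number IR_b: maximum cost of an irredundant broadcast. -/
noncomputable def upperBroadcastIrredundance (G : SimpleGraph V) : ℕ :=
  sSup {c | ∃ f, IsIrredundant G f ∧ cost f = c}

/-- The broadcast irredundance number ir_b: minimum cost of a maximal irredundant broadcast. -/
noncomputable def broadcastIrredundance (G : SimpleGraph V) : ℕ :=
  sInf {c | ∃ f, IsMaximalIrredundant G f ∧ cost f = c}

/-- An independent broadcast: every broadcast vertex hears only itself, i.e. |H_f(v)| = 1. -/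
def IsIndependent (G : SimpleGraph V) (f : V → ℕ) : Prop :=
  IsBroadcast G f ∧ ∀ v, 1 ≤ f v → hears G f v = {v}

/-- A maximal independent broadcast. -/
def IsMaximalIndependent (G : SimpleGraph V) (f : V → ℕ) : Prop :=
  IsIndependent G f ∧ ∀ g, IsIndependent G g → (∀ v, f v ≤ g v) → g = f

/-- The broadcast independence number β_b: maximum cost of an independent broadcast. -/
noncomputable def broadcastIndependence (G : SimpleGraph V) : ℕ :=
  sSup {c | ∃ f, IsIndependent G f ∧ cost f = c}

/-- The lower broadcast independence number i_b: minimum cost of a maximal independent broadcast. -/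
noncomputable def lowerBroadcastIndependence (G : SimpleGraph V) : ℕ :=
  sInf {c | ∃ f, IsMaximalIndependent G f ∧ cost f = c}

/-- A packing broadcast: every vertex hears at most one broadcast vertex. -/
def IsPacking (G : SimpleGraph V) (f : V → ℕ) : Prop :=
  IsBroadcast G f ∧ ∀ u, (hears G f u).Subsingleton

/-- A maximal packing broadcast. -/
def IsMaximalPacking (G : SimpleGraph V) (f : V → ℕ) : Prop :=
  IsPacking G f ∧ ∀ g, IsPacking G g → (∀ v, f v ≤ g v) → g = f

/-- The broadcast packing number P_b: maximum cost of a packing broadcast. -/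
noncomputable def broadcastPacking (G : SimpleGraph V) : ℕ :=
  sSup {c | ∃ f, IsPacking G f ∧ cost f = c}

/-- The lower broadcast packing number p_b: minimum cost of a maximal packing broadcast. -/
noncomputable def lowerBroadcastPacking (G : SimpleGraph V) : ℕ :=
  sInf {c | ∃ f, IsMaximalPacking G f ∧ cost f = c}

end Broadcast

/-!
A minimal dominating broadcast on a connected graph is irredundant, so `Γ_b ≤ IR_b`, and it
suffices to bound the cost of every irredundant broadcast `f` on `C_n` by
`max ⌊n/2⌋ (2 (⌊n/2⌋ - 1))` and to exhibit a minimal dominating broadcast of that cost.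

Every broadcasting vertex `v` has a vertex `t` at distance `f v` that hears only `v`, except
when `f v = 1` and `v` hears only itself, in which case take `t = v + 1`. The geodesic
intervals from `v` to `t` are pairwise disjoint and have at least `f v + 1` vertices each, so
`σ(f) + |V_f^+| ≤ n`. With two or more broadcasting vertices no `f v` reaches the eccentricity
`⌊n/2⌋`, which settles the case of exactly two; with three or more the count gives
`σ(f) ≤ n - 3`. The bound is attained by one vertex broadcasting at strength `⌊n/2⌋` (for
`n = 3`), or by two vertices at distance `1` or `2` broadcasting at strength `⌊n/2⌋ - 1`; both
are minimal dominating because a dominating irredundant broadcast is minimal.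
-/

open scoped Finset

namespace SimpleGraph

variable {V : Type*} [Fintype V] {G : SimpleGraph V} {u v : V}

noncomputable def geodesicInterval (G : SimpleGraph V) (u v : V) : Finset V :=
  {x | G.dist u x + G.dist x v ≤ G.dist u v}

lemma Reachable.dist_add_one_le_card_geodesicInterval (h : G.Reachable u v) :
    G.dist u v + 1 ≤ #(G.geodesicInterval u v) := by
  classical
  obtain ⟨p, hp⟩ := h.exists_walk_length_eq_dist
  calc G.dist u v + 1 = #p.support.toFinset := by
        rw [List.toFinset_card_of_nodup (p.isPath_of_length_eq_dist hp).support_nodup,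
          p.length_support, hp]
    _ ≤ #(G.geodesicInterval u v) := Finset.card_le_card fun x hx => by
        rw [List.mem_toFinset] at hx
        have hsplit := congrArg Walk.length (p.take_spec hx)
        rw [Walk.length_append] at hsplit
        simp only [geodesicInterval, Finset.mem_filter, Finset.mem_univ, true_and]
        have := dist_le (p.takeUntil x hx)
        have := dist_le (p.dropUntil x hx)
        omega

end SimpleGraph

namespace Broadcast

variable {V : Type*} {G : SimpleGraph V} {f g : V → ℕ} {u v w : V}

lemma hears_mono (hgf : ∀ v, g v ≤ f v) : hears G g u ⊆ hears G f u :=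
  fun v hv => ⟨hv.1.trans (hgf v), hv.2.trans (hgf v)⟩

lemma privateBorder_subset_privateNbhd : privateBorder G f v ⊆ privateNbhd G f v := by
  unfold privateBorder
  split_ifs with h
  · rw [h.2]
  · exact fun u hu => hu.1

lemma privateBorder_nonempty_of_mem_privateNbhd (hu : u ∈ privateNbhd G f v)
    (hd : G.dist u v = f v) : (privateBorder G f v).Nonempty := by
  unfold privateBorder
  split_ifs
  · exact Set.singleton_nonempty v
  · exact ⟨u, hu, hd⟩

lemma lt_dist_of_hears_eq_singleton (hu : hears G f u = {v}) (hw : 1 ≤ f w) (hwv : w ≠ v) :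
    f w < G.dist u w := by
  by_contra! h
  have hw' : w ∈ hears G f u := ⟨hw, h⟩
  rw [hu] at hw'
  exact hwv hw'

variable [Fintype V]

lemma IsIrredundant.lt_ecc (hf : IsIrredundant G f) (hv : 1 ≤ f v) (hw : 1 ≤ f w)
    (hvw : v ≠ w) : f w < ecc G w := by
  obtain ⟨p, hp⟩ := hf.2 v hv
  calc f w < G.dist p w :=
        lt_dist_of_hears_eq_singleton (privateBorder_subset_privateNbhd hp) hw hvw.symm
    _ = G.dist w p := G.dist_comm
    _ ≤ ecc G w := Finset.le_sup (f := G.dist w) (Finset.mem_univ p)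

theorem IsDominating.isMinimalDominating (hd : IsDominating G f) (hi : IsIrredundant G f) :
    IsMinimalDominating G f := by
  refine ⟨hd, fun g hg hgf => funext fun v => ?_⟩
  by_contra hne
  have hlt : g v < f v := lt_of_le_of_ne (hgf v) hne
  obtain ⟨u, hu⟩ := hi.2 v (by omega)
  obtain ⟨w, hw⟩ := hg.2 u
  have hwv : w = v := by
    have := hears_mono hgf hw
    rwa [privateBorder_subset_privateNbhd hu] at this
  subst hwv
  have := hw.1
  unfold privateBorder at hu
  split_ifs at hu with hspec
  · have := hspec.1
    omega
  · have := hw.2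
    have := hu.2
    omega

theorem IsMinimalDominating.isIrredundant (hG : G.Connected) (hf : IsMinimalDominating G f) :
    IsIrredundant G f := by
  classical
  refine ⟨hf.1.1, fun v hv => ?_⟩
  by_contra hPB
  have hlt : ∀ u ∈ privateNbhd G f v, G.dist u v < f v := fun u hu =>
    lt_of_le_of_ne (hu.symm ▸ Set.mem_singleton v : v ∈ hears G f u).2
      fun hd => hPB (privateBorder_nonempty_of_mem_privateNbhd hu hd)
  -- if `f v = 1`, all private neighbours of `v` are `v` itself, so `PB(v) = {v}`
  have hv2 : privateNbhd G f v ≠ ∅ → 2 ≤ f v := by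
    intro hne
    by_contra h1
    have hPN : privateNbhd G f v ⊆ {v} := fun u hu =>
      hG.dist_eq_zero_iff.1 (by have := hlt u hu; omega)
    have hspec : f v = 1 ∧ privateNbhd G f v = {v} :=
      ⟨by omega, (Set.subset_singleton_iff_eq.1 hPN).resolve_left hne⟩
    apply hPB
    rw [privateBorder, if_pos hspec]
    exact Set.singleton_nonempty v
  set g := Function.update f v (f v - 1)
  have hgf : ∀ w, g w ≤ f w := by
    intro w
    rcases eq_or_ne w v with rfl | hwv <;> simp [g, *]
  have hg : IsDominating G g := by
    refine ⟨fun w => (hgf w).trans (hf.1.1 w), fun u => ?_⟩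
    by_cases hu : u ∈ privateNbhd G f v
    · have := hv2 (Set.nonempty_iff_ne_empty.1 ⟨u, hu⟩)
      have := hlt u hu
      exact ⟨v, show 1 ≤ g v ∧ G.dist u v ≤ g v by simp only [g, Function.update_self]; omega⟩
    · obtain ⟨w, hw, hwv⟩ : ∃ w ∈ hears G f u, w ≠ v := by
        by_contra! h
        exact hu (Set.eq_singleton_iff_nonempty_unique_mem.2 ⟨hf.1.2 u, h⟩)
      have hgw : g w = f w := Function.update_of_ne hwv _ _
      exact ⟨w, show 1 ≤ g w ∧ G.dist u w ≤ g w by rw [hgw]; exact hw⟩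
  have := congrFun (hf.2 g hg hgf) v
  simp only [g, Function.update_self] at this
  omega

variable {ν : V → V} {t s : V}

def IsPrivateEnd (G : SimpleGraph V) (f : V → ℕ) (ν : V → V) (v t : V) : Prop :=
  G.dist v t = f v ∧ (hears G f t = {v} ∨ f v = 1 ∧ hears G f v = {v} ∧ t = ν v)

lemma IsIrredundant.exists_isPrivateEnd (hf : IsIrredundant G f) (hv : 1 ≤ f v)
    (hadj : G.Adj v (ν v)) : ∃ t, IsPrivateEnd G f ν v t := by
  obtain ⟨u, hu⟩ := hf.2 v hv
  unfold privateBorder at hu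
  split_ifs at hu with hspec
  · have hvv : v ∈ privateNbhd G f v := hspec.2 ▸ Set.mem_singleton v
    exact ⟨ν v, by rw [dist_eq_one_iff_adj.2 hadj, hspec.1], .inr ⟨hspec.1, hvv, rfl⟩⟩
  · exact ⟨u, by rw [G.dist_comm, hu.2], .inl hu.1⟩

lemma IsPrivateEnd.disjoint_geodesicInterval (hG : G.Connected) (ht : IsPrivateEnd G f ν v t)
    (hs : IsPrivateEnd G f ν w s) (hv : 1 ≤ f v) (hw : 1 ≤ f w) (hvw : v ≠ w)
    (hν : ν v ≠ ν w) : Disjoint (G.geodesicInterval v t) (G.geodesicInterval w s) := by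
  rw [Finset.disjoint_left]
  intro x hxt hxs
  simp only [geodesicInterval, Finset.mem_filter, Finset.mem_univ, true_and] at hxt hxs
  rw [ht.1] at hxt
  rw [hs.1] at hxs
  have := G.dist_comm (u := x) (v := v)
  have := G.dist_comm (u := x) (v := w)
  have := G.dist_comm (u := x) (v := t)
  have := G.dist_comm (u := x) (v := s)
  rcases ht.2 with htv | ⟨hv1, hvv, rfl⟩ <;> rcases hs.2 with hsw | ⟨hw1, hww, rfl⟩
  · have := lt_dist_of_hears_eq_singleton htv hw hvw.symm
    have := lt_dist_of_hears_eq_singleton hsw hv hvw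
    have := hG.dist_triangle (u := t) (v := x) (w := w)
    have := hG.dist_triangle (u := s) (v := x) (w := v)
    omega
  · have := lt_dist_of_hears_eq_singleton htv hw hvw.symm
    have := lt_dist_of_hears_eq_singleton hww hv hvw
    have := hG.dist_triangle (u := t) (v := x) (w := w)
    have := hG.dist_triangle (u := w) (v := x) (w := v)
    omega
  · have := lt_dist_of_hears_eq_singleton hvv hw hvw.symm
    have := lt_dist_of_hears_eq_singleton hsw hv hvw
    have := hG.dist_triangle (u := v) (v := x) (w := w)
    have := hG.dist_triangle (u := s) (v := x) (w := v)
    omega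
  · -- both `v` and `w` hear only themselves, so `x` must be the common neighbour `ν v = ν w`
    have := lt_dist_of_hears_eq_singleton hvv hw hvw.symm
    have := hG.dist_triangle (u := v) (v := x) (w := w)
    have hxv : x = ν v := hG.dist_eq_zero_iff.1 (by omega)
    have hxw : x = ν w := hG.dist_eq_zero_iff.1 (by omega)
    exact hν (hxv.symm.trans hxw)

theorem IsIrredundant.cost_add_card_le (hG : G.Connected) (hν : Function.Injective ν)
    (hadj : ∀ v, G.Adj v (ν v)) (hf : IsIrredundant G f) :
    cost f + #{v | 1 ≤ f v} ≤ Fintype.card V := by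
  classical
  set B : Finset V := {v | 1 ≤ f v}
  have hB : ∀ v ∈ B, 1 ≤ f v := fun v hv => (Finset.mem_filter.1 hv).2
  have : ∀ v ∈ B, ∃ t, IsPrivateEnd G f ν v t := fun v hv =>
    hf.exists_isPrivateEnd (hB v hv) (hadj v)
  choose! t ht using this
  have hdisj : (B : Set V).PairwiseDisjoint fun v => G.geodesicInterval v (t v) :=
    fun v hv w hw hvw => (ht v hv).disjoint_geodesicInterval hG (ht w hw) (hB v hv) (hB w hw)
      hvw (hν.ne hvw)
  calc cost f + #B = ∑ v ∈ B, (G.dist v (t v) + 1) := by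
        rw [Finset.sum_add_distrib, Finset.card_eq_sum_ones, cost,
          ← Finset.sum_filter_of_ne fun v _ hv => Nat.one_le_iff_ne_zero.2 hv]
        congr 1
        exact Finset.sum_congr rfl fun v hv => (ht v hv).1.symm
    _ ≤ ∑ v ∈ B, #(G.geodesicInterval v (t v)) := Finset.sum_le_sum fun v _ =>
        (hG v (t v)).dist_add_one_le_card_geodesicInterval
    _ = #(B.biUnion fun v => G.geodesicInterval v (t v)) := (Finset.card_biUnion hdisj).symm
    _ ≤ Fintype.card V := Finset.card_le_univ _

end Broadcast

namespace Broadcast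

variable {V : Type*} [DecidableEq V] {G : SimpleGraph V} {a b u v x : V} {k : ℕ}

lemma pair_apply (hab : a ≠ b) (x : V) :
    (Pi.single a k + Pi.single b k : V → ℕ) x = if x = a ∨ x = b then k else 0 := by
  simp only [Pi.add_apply, Pi.single_apply]
  split_ifs <;> simp_all

lemma mem_hears_pair (hab : a ≠ b) (hk : 1 ≤ k) :
    x ∈ hears G (Pi.single a k + Pi.single b k) u ↔ (x = a ∨ x = b) ∧ G.dist u x ≤ k := by
  simp only [hears, Set.mem_ofPred_eq, pair_apply hab]
  split_ifs <;> simp_all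

lemma privateBorder_pair_nonempty (hab : a ≠ b) (hk : 1 ≤ k) (hua : G.dist u a = k)
    (hub : k < G.dist u b) : (privateBorder G (Pi.single a k + Pi.single b k) a).Nonempty := by
  refine privateBorder_nonempty_of_mem_privateNbhd ?_
    (by rw [hua, pair_apply hab, if_pos (.inl rfl)])
  refine Set.eq_singleton_iff_unique_mem.2 ⟨(mem_hears_pair hab hk).2 ⟨.inl rfl, hua.le⟩,
    fun x hx => ?_⟩
  obtain ⟨rfl | rfl, hx⟩ := (mem_hears_pair hab hk).1 hx
  · rfl
  · omega

variable [Fintype V]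

lemma cost_single (v : V) (c : ℕ) : cost (Pi.single v c) = c := by
  simp [cost, Finset.sum_pi_single']

theorem isMinimalDominating_single_ecc (hv : 1 ≤ ecc G v) :
    IsMinimalDominating G (Pi.single v (ecc G v)) := by
  set f : V → ℕ := Pi.single v (ecc G v)
  have hfv : f v = ecc G v := Pi.single_eq_same _ _
  have hsupp : ∀ w, 1 ≤ f w → w = v := fun w hw => by
    by_contra h
    simp [f, h] at hw
  have hdom : IsDominating G f := by
    refine ⟨fun w => ?_, fun w => ⟨v, by rw [hfv]; exact hv, ?_⟩⟩
    · rcases eq_or_ne w v with rfl | h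
      · exact hfv.le
      · simp [f, h]
    · rw [hfv, G.dist_comm]
      exact Finset.le_sup (f := G.dist v) (Finset.mem_univ w)
  obtain ⟨u, -, hu⟩ := Finset.exists_mem_eq_sup Finset.univ ⟨v, Finset.mem_univ v⟩ (G.dist v)
  have hdu : G.dist u v = f v := by rw [G.dist_comm, hfv, ecc, hu]
  have hPN : u ∈ privateNbhd G f v :=
    Set.eq_singleton_iff_unique_mem.2 ⟨⟨hfv ▸ hv, hdu.le⟩, fun w hw => hsupp w hw.1⟩
  refine hdom.isMinimalDominating ⟨hdom.1, fun w hw => ?_⟩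
  obtain rfl := hsupp w hw
  exact privateBorder_nonempty_of_mem_privateNbhd hPN hdu

lemma cost_pair : cost (Pi.single a k + Pi.single b k : V → ℕ) = 2 * k := by
  simp only [cost, Pi.add_apply, Finset.sum_add_distrib, Finset.sum_pi_single', Finset.mem_univ,
    if_true, two_mul]

theorem isIrredundant_pair (hab : a ≠ b) (hk : 1 ≤ k) (hka : k ≤ ecc G a) (hkb : k ≤ ecc G b)
    (hua : G.dist u a = k) (hub : k < G.dist u b) (hvb : G.dist v b = k)
    (hva : k < G.dist v a) : IsIrredundant G (Pi.single a k + Pi.single b k) := by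
  refine ⟨fun x => ?_, fun x hx => ?_⟩
  · rw [pair_apply hab]
    split_ifs with h
    · rcases h with rfl | rfl <;> assumption
    · exact Nat.zero_le _
  · rw [pair_apply hab] at hx
    split_ifs at hx with h
    · rcases h with rfl | rfl
      · exact privateBorder_pair_nonempty hab hk hua hub
      · rw [add_comm]
        exact privateBorder_pair_nonempty hab.symm hk hvb hva
    · omega

end Broadcast

namespace Fin

variable {n : ℕ}

def cycleNorm (a : Fin n) : ℕ := min a.val (n - a.val)

lemma cycleNorm_neg [NeZero n] (a : Fin n) : (-a).cycleNorm = a.cycleNorm := by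
  have := a.isLt
  rw [cycleNorm, cycleNorm, Fin.val_neg]
  split_ifs with h
  · simp [h]
  · omega

lemma cycleNorm_add_le (a b : Fin n) : (a + b).cycleNorm ≤ a.cycleNorm + b.cycleNorm := by
  have := a.isLt
  have := b.isLt
  rw [cycleNorm, cycleNorm, cycleNorm, Fin.val_add_eq_ite]
  split_ifs <;> omega

lemma cycleNorm_le_half (a : Fin n) : a.cycleNorm ≤ n / 2 := by
  rw [cycleNorm]
  omega

end Fin

namespace SimpleGraph

open scoped Fin.NatCast

variable {n : ℕ} [NeZero n]

lemma cycleGraph_adj_add_one (hn : 2 ≤ n) (x : Fin n) : (cycleGraph n).Adj x (x + 1) := by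
  rw [cycleGraph_adj', add_sub_cancel_left, Fin.val_one', Nat.one_mod_eq_one.2 (by omega)]
  exact .inr rfl

lemma cycleGraph_connected' : (cycleGraph n).Connected :=
  ⟨cycleGraph_preconnected⟩

lemma cycleGraph_dist_add_natCast_le (x : Fin n) (k : ℕ) : (cycleGraph n).dist x (x + k) ≤ k := by
  induction k with
  | zero => simp
  | succ k ih =>
    have hstep : (cycleGraph n).dist (x + k) (x + k + 1) ≤ 1 := by
      rcases Nat.lt_or_ge n 2 with hn | hn
      · have : x + k + 1 = x + k := Subsingleton.elim (h := by
          rw [Fin.subsingleton_iff_le_one]; omega) _ _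
        simp [this]
      · exact (dist_eq_one_iff_adj.2 (cycleGraph_adj_add_one hn _)).le
    calc (cycleGraph n).dist x (x + (k + 1 : ℕ))
        ≤ (cycleGraph n).dist x (x + k) + (cycleGraph n).dist (x + k) (x + k + 1) := by
          rw [Nat.cast_succ, ← add_assoc]
          exact cycleGraph_connected'.dist_triangle
      _ ≤ k + 1 := by omega

lemma cycleNorm_sub_le_length {u v : Fin n} (p : (cycleGraph n).Walk u v) :
    (v - u).cycleNorm ≤ p.length := by
  induction p with
  | nil => simp [Fin.cycleNorm]
  | @cons a x v hadj p ih =>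
    have hstep : (x - a).cycleNorm ≤ 1 := by
      rw [cycleGraph_adj'] at hadj
      rcases hadj with h | h
      · rw [← neg_sub, Fin.cycleNorm_neg, Fin.cycleNorm, h]
        omega
      · rw [Fin.cycleNorm, h]
        omega
    calc (v - a).cycleNorm = ((x - a) + (v - x)).cycleNorm := by rw [sub_add_sub_cancel']
      _ ≤ (x - a).cycleNorm + (v - x).cycleNorm := Fin.cycleNorm_add_le _ _
      _ ≤ (Walk.cons hadj p).length := by rw [Walk.length_cons]; omega

theorem cycleGraph_dist (u v : Fin n) : (cycleGraph n).dist u v = (v - u).cycleNorm := by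
  refine le_antisymm ?_ ?_
  · have h1 := cycleGraph_dist_add_natCast_le u (v - u).val
    have h2 := cycleGraph_dist_add_natCast_le v (u - v).val
    rw [Fin.cast_val_eq_self, add_sub_cancel] at h1 h2
    rw [dist_comm] at h2
    have hneg : (u - v).val = if v - u = 0 then 0 else n - (v - u).val := by
      rw [← neg_sub, Fin.val_neg]
    split_ifs at hneg with h
    · simp [sub_eq_zero.1 h]
    · rw [Fin.cycleNorm]
      omega
  · obtain ⟨p, hp⟩ := cycleGraph_connected'.exists_walk_length_eq_dist u v
    exact hp ▸ cycleNorm_sub_le_length p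

lemma cycleGraph_dist_of_le {u v : Fin n} (h : u ≤ v) :
    (cycleGraph n).dist u v = min (v - u : ℕ) (n - (v - u)) := by
  rw [cycleGraph_dist, Fin.cycleNorm, Fin.sub_val_of_le h]

end SimpleGraph

namespace Broadcast

open scoped Fin.NatCast

variable {n : ℕ} [NeZero n]

lemma ecc_cycleGraph (v : Fin n) : ecc (cycleGraph n) v = n / 2 := by
  refine le_antisymm (Finset.sup_le fun u _ => ?_) ?_
  · rw [cycleGraph_dist]
    exact Fin.cycleNorm_le_half _
  · calc n / 2 = (cycleGraph n).dist v (v + (n / 2 : ℕ)) := by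
          rw [cycleGraph_dist, add_sub_cancel_left, Fin.cycleNorm,
            Fin.val_cast_of_lt (Nat.div_lt_self (NeZero.pos n) one_lt_two)]
          omega
      _ ≤ ecc (cycleGraph n) v := Finset.le_sup (f := (cycleGraph n).dist v) (Finset.mem_univ _)

theorem IsIrredundant.cost_le_cycleGraph (hn : 3 ≤ n) {f : Fin n → ℕ}
    (hf : IsIrredundant (cycleGraph n) f) : cost f ≤ max (n / 2) (2 * (n / 2 - 1)) := by
  set B : Finset (Fin n) := {v | 1 ≤ f v}
  have hB : ∀ v ∈ B, 1 ≤ f v := fun v hv => (Finset.mem_filter.1 hv).2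
  have hcount : cost f + #B ≤ n := by
    simpa using hf.cost_add_card_le cycleGraph_connected' (add_left_injective 1)
      (cycleGraph_adj_add_one (by omega))
  have hcost : cost f = ∑ v ∈ B, f v :=
    (Finset.sum_filter_of_ne fun v _ hv => Nat.one_le_iff_ne_zero.2 hv).symm
  rcases le_or_gt #B 1 with hB1 | hB2
  · obtain ⟨v, hv⟩ := Finset.card_le_one_iff_subset_singleton.1 hB1
    calc cost f ≤ ∑ w ∈ {v}, f w := hcost ▸ Finset.sum_le_sum_of_subset hv
      _ ≤ n / 2 := by simpa [ecc_cycleGraph] using hf.1 v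
      _ ≤ _ := le_max_left _ _
  · have hlt : ∀ w ∈ B, f w ≤ n / 2 - 1 := by
      intro w hw
      obtain ⟨v, hv, hvw⟩ := B.exists_mem_ne hB2 w
      have := hf.lt_ecc (hB v hv) (hB w hw) hvw
      rw [ecc_cycleGraph] at this
      omega
    rcases (show #B = 2 ∨ 3 ≤ #B by omega) with h2 | h3
    · calc cost f ≤ #B • (n / 2 - 1) := hcost ▸ Finset.sum_le_card_nsmul _ _ _ hlt
        _ = 2 * (n / 2 - 1) := by rw [h2, smul_eq_mul]
        _ ≤ _ := le_max_right _ _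
    · omega

-- The two balls cover the arc from `1 - ⌊n/2⌋` to `n % 2 + ⌊n/2⌋`, which is all of `C_n`, and
-- the outer end of each ball lies outside the other one.
theorem isMinimalDominating_cycleGraph_pair (hn : 4 ≤ n) :
    IsMinimalDominating (cycleGraph n)
      (Pi.single 0 (n / 2 - 1) + Pi.single ((n % 2 + 1 : ℕ) : Fin n) (n / 2 - 1)) := by
  set m := n / 2
  set D : Fin n := ((n % 2 + 1 : ℕ) : Fin n)
  have hD : D.val = n % 2 + 1 := Fin.val_cast_of_lt (by omega)
  have hD0 : (0 : Fin n) ≠ D := fun h => by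
    have := congrArg Fin.val h
    rw [Fin.val_zero] at this
    omega
  have hdist0 : ∀ u : Fin n, (cycleGraph n).dist u 0 = min u.val (n - u.val) := fun u => by
    rw [(cycleGraph n).dist_comm, cycleGraph_dist_of_le (Fin.zero_le u), Fin.val_zero,
      Nat.sub_zero]
  have hdistD : ∀ u : Fin n, D ≤ u →
      (cycleGraph n).dist u D = min (u.val - D.val) (n - (u.val - D.val)) := fun u h => by
    rw [(cycleGraph n).dist_comm, cycleGraph_dist_of_le h]
  have hecc : ∀ v, m - 1 ≤ ecc (cycleGraph n) v := fun v => by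
    rw [ecc_cycleGraph]
    omega
  set u₀ : Fin n := ((n - m + 1 : ℕ) : Fin n)
  set u₁ : Fin n := ((n - m : ℕ) : Fin n)
  have hu₀ : u₀.val = n - m + 1 := Fin.val_cast_of_lt (by omega)
  have hu₁ : u₁.val = n - m := Fin.val_cast_of_lt (by omega)
  have hDu₀ : D ≤ u₀ := Fin.le_def.2 (by omega)
  have hDu₁ : D ≤ u₁ := Fin.le_def.2 (by omega)
  have hirr := isIrredundant_pair hD0 (by omega) (hecc 0) (hecc D)
    (by rw [hdist0]; omega : (cycleGraph n).dist u₀ 0 = m - 1) (by rw [hdistD u₀ hDu₀]; omega)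
    (by rw [hdistD u₁ hDu₁]; omega) (by rw [hdist0]; omega)
  refine IsDominating.isMinimalDominating ⟨hirr.1, fun u => ?_⟩ hirr
  by_cases hu : u.val ≤ m - 1 ∨ n - m + 1 ≤ u.val
  · exact ⟨0, (mem_hears_pair hD0 (by omega)).2 ⟨.inl rfl, by rw [hdist0]; omega⟩⟩
  · refine ⟨D, (mem_hears_pair hD0 (by omega)).2 ⟨.inr rfl, ?_⟩⟩
    rw [hdistD u (Fin.le_def.2 (by omega))]
    omega

theorem exists_isMinimalDominating_cycleGraph_cost_eq_max (hn : 3 ≤ n) :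
    ∃ f, IsMinimalDominating (cycleGraph n) f ∧ cost f = max (n / 2) (2 * (n / 2 - 1)) := by
  rcases hn.eq_or_lt with rfl | hn
  · refine ⟨_, isMinimalDominating_single_ecc (v := 0) ?_, ?_⟩
    · rw [ecc_cycleGraph]
    · rw [cost_single, ecc_cycleGraph]
      rfl
  · refine ⟨_, isMinimalDominating_cycleGraph_pair hn, ?_⟩
    rw [cost_pair]
    omega

end Broadcast

open Broadcast in
/-- For every integer n ≥ 3, IR_b(C_n) = Γ_b(C_n). -/
theorem upperBroadcastIrredundance_eq_upperBroadcastDomination_cycleGraph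
    (n : ℕ) (hn : 3 ≤ n) :
    upperBroadcastIrredundance (SimpleGraph.cycleGraph n) =
      upperBroadcastDomination (SimpleGraph.cycleGraph n) := by
  have : NeZero n := ⟨by omega⟩
  have hG : (cycleGraph n).Connected := cycleGraph_connected'
  obtain ⟨f, hf, hcost⟩ := exists_isMinimalDominating_cycleGraph_cost_eq_max hn
  have hIR : IsGreatest {c | ∃ g, IsIrredundant (cycleGraph n) g ∧ cost g = c} (cost f) :=
    ⟨⟨f, hf.isIrredundant hG, rfl⟩, by
      rintro _ ⟨g, hg, rfl⟩
      exact hcost ▸ hg.cost_le_cycleGraph hn⟩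
  have hΓ : IsGreatest {c | ∃ g, IsMinimalDominating (cycleGraph n) g ∧ cost g = c} (cost f) :=
    ⟨⟨f, hf, rfl⟩, by
      rintro _ ⟨g, hg, rfl⟩
      exact hcost ▸ (hg.isIrredundant hG).cost_le_cycleGraph hn⟩
  rw [upperBroadcastIrredundance, upperBroadcastDomination, hIR.csSup_eq, hΓ.csSup_eq]
end

section
/- Let f be a maximal irredundant broadcast on the path P_n. If H_f(x_i) = ∅ for some vertex x_i, then some neighbor of x_i hears an f-broadcast vertex, i.e. N(x_i) ∩ N_f(V_f^+) ≠ ∅, where N_f(V_f^+) is the set of all vertices u with H_f(u) ≠ ∅. -/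
open SimpleGraph

/-!
If neither `i` nor any neighbour of `i` hears a broadcast vertex, raise `f i` from `0` to `1`.
Only vertices within distance one of `i` can hear the new broadcast at `i`, and they heard nothing
before, so every vertex that heard something hears exactly the same set as before; hence all old
private borders survive. The new broadcast vertex `i` hears only itself, so its private border is
`{i}` or contains a neighbour at distance one. The result is a strictly larger irredundant
broadcast, contradicting maximality.
-/

namespace Broadcast

variable {V : Type*} {G : SimpleGraph V} {f g : V → ℕ} {i v w : V}

theorem dist_le_ecc [Fintype V] (G : SimpleGraph V) (v u : V) : G.dist v u ≤ ecc G v :=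
  Finset.le_sup (f := fun u => G.dist v u) (Finset.mem_univ u)

theorem one_le_ecc [Fintype V] [Nontrivial V] (hG : G.Connected) (v : V) : 1 ≤ ecc G v := by
  obtain ⟨u, hu⟩ := exists_ne v
  exact le_trans (hG.pos_dist_of_ne hu.symm) (dist_le_ecc G v u)

theorem apply_eq_zero_of_hears_self_eq_empty (h : hears G f v = ∅) : f v = 0 := by
  by_contra hv
  have hself : v ∈ hears G f v := ⟨Nat.one_le_iff_ne_zero.mpr hv, by simp⟩
  simp [h] at hself

theorem privateBorder_congr (hv : f v = g v) (h : privateNbhd G f v = privateNbhd G g v) :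
    privateBorder G f v = privateBorder G g v := by
  simp only [privateBorder, hv, h]

theorem privateBorder_nonempty_of_apply_eq_one (hG : G.Connected) (hv : f v = 1)
    (hmem : v ∈ privateNbhd G f v) : (privateBorder G f v).Nonempty := by
  by_cases hPN : privateNbhd G f v = {v}
  · simp [privateBorder, hv, hPN]
  · obtain ⟨u, hu, huv⟩ : ∃ u ∈ privateNbhd G f v, u ≠ v := by
      by_contra! h
      exact hPN (Set.eq_singleton_iff_unique_mem.mpr ⟨hmem, h⟩)
    have hdist : G.dist u v ≤ 1 := by
      have hvu : v ∈ hears G f u := by rw [show hears G f u = {v} from hu]; rfl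
      simpa [hv] using hvu.2
    have := hG.pos_dist_of_ne huv
    refine ⟨u, ?_⟩
    simp only [privateBorder, hv, hPN, and_false, if_false, Set.mem_ofPred_eq]
    exact ⟨hu, by omega⟩

variable [DecidableEq V]

theorem mem_hears_update_of_ne (hv : v ≠ i) :
    v ∈ hears G (Function.update f i 1) w ↔ v ∈ hears G f w := by
  simp [hears, Function.update_of_ne hv]

theorem hears_update_self (hi : hears G f i = ∅) : hears G (Function.update f i 1) i = {i} := by
  ext v
  by_cases hv : v = i
  · subst hv
    simp [hears]
  · simp [mem_hears_update_of_ne hv, hi, hv]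

theorem hears_update_of_one_lt_dist (hfi : f i = 0) (hw : 1 < G.dist w i) :
    hears G (Function.update f i 1) w = hears G f w := by
  ext v
  by_cases hv : v = i
  · subst hv
    simp [hears, hfi]
    omega
  · exact mem_hears_update_of_ne hv

section SilentNeighbourhood

variable (hG : G.Connected) (hi : hears G f i = ∅) (hnbr : ∀ u, G.Adj i u → hears G f u = ∅)
include hG hi hnbr

theorem hears_update_of_nonempty (hw : (hears G f w).Nonempty) :
    hears G (Function.update f i 1) w = hears G f w := by
  refine hears_update_of_one_lt_dist (apply_eq_zero_of_hears_self_eq_empty hi) ?_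
  by_contra! hle
  rcases Nat.le_one_iff_eq_zero_or_eq_one.mp hle with h0 | h1
  · rw [hG.dist_eq_zero_iff.mp h0, hi] at hw
    exact hw.ne_empty rfl
  · rw [hnbr w (dist_eq_one_iff_adj.mp h1).symm] at hw
    exact hw.ne_empty rfl

theorem privateNbhd_update_of_ne (hv : v ≠ i) :
    privateNbhd G (Function.update f i 1) v = privateNbhd G f v := by
  ext u
  simp only [privateNbhd, Set.mem_ofPred_eq]
  constructor
  · intro hu
    have hvu : v ∈ hears G f u := (mem_hears_update_of_ne hv).mp (by rw [hu]; rfl)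
    rwa [← hears_update_of_nonempty hG hi hnbr ⟨v, hvu⟩]
  · intro hu
    rwa [hears_update_of_nonempty hG hi hnbr (by rw [hu]; exact Set.singleton_nonempty v)]

theorem isIrredundant_update [Fintype V] [Nontrivial V] (hf : IsIrredundant G f) :
    IsIrredundant G (Function.update f i 1) := by
  refine ⟨fun v => ?_, fun v hv => ?_⟩
  · by_cases hvi : v = i
    · subst hvi
      simpa using one_le_ecc hG v
    · simpa [Function.update_of_ne hvi] using hf.1 v
  · by_cases hvi : v = i
    · subst hvi
      exact privateBorder_nonempty_of_apply_eq_one hG (by simp) (hears_update_self hi)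
    · rw [privateBorder_congr (Function.update_of_ne hvi 1 f)
        (privateNbhd_update_of_ne hG hi hnbr hvi)]
      exact hf.2 v (by simpa [Function.update_of_ne hvi] using hv)

end SilentNeighbourhood

theorem IsMaximalIrredundant.exists_adj_hears_nonempty [Fintype V] [Nontrivial V]
    (hG : G.Connected) (hf : IsMaximalIrredundant G f) (hi : hears G f i = ∅) :
    ∃ u, G.Adj i u ∧ (hears G f u).Nonempty := by
  by_contra! hnbr
  have hfi := apply_eq_zero_of_hears_self_eq_empty hi
  have hle : ∀ v, f v ≤ Function.update f i 1 v := by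
    intro v
    by_cases hvi : v = i
    · subst hvi; simp [hfi]
    · simp [Function.update_of_ne hvi]
  have heq := congrFun (hf.2 _ (isIrredundant_update hG hi hnbr hf.1) hle) i
  simp [hfi] at heq

end Broadcast

open Broadcast in
/-- If f is a maximal irredundant broadcast on P_n and H_f(x_i) = ∅,
then some neighbor of x_i hears an f-broadcast vertex. -/
theorem neighbor_hears_of_maximal_irredundant_pathGraph (n : ℕ) (hn : 2 ≤ n)
    (f : Fin n → ℕ) (hf : IsMaximalIrredundant (SimpleGraph.pathGraph n) f)
    (i : Fin n) (hi : hears (SimpleGraph.pathGraph n) f i = ∅) :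
    ∃ u : Fin n, (SimpleGraph.pathGraph n).Adj i u ∧
      hears (SimpleGraph.pathGraph n) f u ≠ ∅ := by
  have : Nontrivial (Fin n) := Fin.nontrivial_iff_two_le.mpr hn
  obtain ⟨u, hadj, hu⟩ := hf.exists_adj_hears_nonempty ⟨pathGraph_preconnected n⟩ hi
  exact ⟨u, hadj, hu.ne_empty⟩
end
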